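/- arXiv:2107.05266 — 3 statements merged into one kernel-verified Lean document; each statement's English description precedes it below -/
import Mathlib

section
/- If a pure element (0, u) of J_n is in the same orbit as (b, v) under the automorphism group of J_n (i.e., Φ(0,u) = (b,v) for some automorphism Φ) and b ≠ 0, then v = 0; consequently a nonzero pure element cannot be equivalent under automorphisms to a non-pure element. -/
/-- The spin factor Jordan algebra product on `ℝ × ℝ^d` (here `J_n` with `d = n - 1`). -/
noncomputable def Jmul (d : ℕ) (x y : ℝ × EuclideanSpace ℝ (Fin d)) :
    ℝ × EuclideanSpace ℝ (Fin d) :=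
  (x.1 * y.1 + (inner ℝ x.2 y.2 : ℝ), x.1 • y.2 + y.1 • x.2)

/-- An algebra automorphism of `J_n`: a linear bijection preserving the product. -/
def IsJAut (d : ℕ) (Φ : ℝ × EuclideanSpace ℝ (Fin d) → ℝ × EuclideanSpace ℝ (Fin d)) : Prop :=
  Function.Bijective Φ ∧ IsLinearMap ℝ Φ ∧ ∀ x y, Φ (Jmul d x y) = Jmul d (Φ x) (Φ y)

/-! The proof idea: an automorphism fixes the unit `(1, 0)`, hence every scalar `(c, 0)`.
Squaring gives `(0, u) ∘ (0, u) = (‖u‖², 0)` and `(b, v) ∘ (b, v) = (b² + ‖v‖², 2b v)`, so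
`Φ (0, u) = (b, v)` forces `2b v = 0`. If `b ≠ 0` then `v = 0`, so `Φ (0, u) = Φ (b, 0)`, and
injectivity gives `(0, u) = (b, 0)`, i.e. `b = 0` after all. -/

section

variable {d : ℕ}

@[simp]
lemma Jmul_one_left (y : ℝ × EuclideanSpace ℝ (Fin d)) : Jmul d (1, 0) y = y := by
  simp [Jmul]

@[simp]
lemma Jmul_one_right (y : ℝ × EuclideanSpace ℝ (Fin d)) : Jmul d y (1, 0) = y := by
  simp [Jmul]

lemma Jmul_self_pure (u : EuclideanSpace ℝ (Fin d)) :
    Jmul d (0, u) (0, u) = (inner ℝ u u, 0) := by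
  simp [Jmul]

lemma Jmul_self_snd (x : ℝ × EuclideanSpace ℝ (Fin d)) :
    (Jmul d x x).2 = (2 * x.1) • x.2 := by
  simp only [Jmul, two_mul, add_smul]

namespace IsJAut

variable {Φ : ℝ × EuclideanSpace ℝ (Fin d) → ℝ × EuclideanSpace ℝ (Fin d)}

lemma map_one (hΦ : IsJAut d Φ) : Φ (1, 0) = (1, 0) := by
  obtain ⟨x, hx⟩ := hΦ.1.2 (1, 0)
  calc Φ (1, 0) = Jmul d (Φ (1, 0)) (Φ x) := by rw [hx, Jmul_one_right]
    _ = (1, 0) := by rw [← hΦ.2.2, Jmul_one_left, hx]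

lemma map_scalar (hΦ : IsJAut d Φ) (c : ℝ) : Φ (c, 0) = (c, 0) := by
  have hc : ((c, 0) : ℝ × EuclideanSpace ℝ (Fin d)) = c • (1, 0) := by simp
  rw [hc, hΦ.2.1.map_smul, hΦ.map_one]

lemma snd_eq_zero_of_map_pure {u v : EuclideanSpace ℝ (Fin d)} {b : ℝ} (hΦ : IsJAut d Φ)
    (h : Φ (0, u) = (b, v)) (hb : b ≠ 0) : v = 0 := by
  have hsq := congrArg Prod.snd (hΦ.2.2 (0, u) (0, u))
  rw [Jmul_self_pure, hΦ.map_scalar, Jmul_self_snd, h] at hsq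
  exact (smul_eq_zero.mp hsq.symm).resolve_left (mul_ne_zero two_ne_zero hb)

lemma fst_eq_zero_of_map_pure {u v : EuclideanSpace ℝ (Fin d)} {b : ℝ} (hΦ : IsJAut d Φ)
    (h : Φ (0, u) = (b, v)) : b = 0 := by
  by_contra hb
  have hv := hΦ.snd_eq_zero_of_map_pure h hb
  have hpre : ((0, u) : ℝ × EuclideanSpace ℝ (Fin d)) = (b, 0) :=
    hΦ.1.1 (by rw [h, hv, hΦ.map_scalar])
  exact hb (congrArg Prod.fst hpre).symm

end IsJAut

end

theorem stmt_6_general (d : ℕ)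
    (Φ : ℝ × EuclideanSpace ℝ (Fin d) → ℝ × EuclideanSpace ℝ (Fin d))
    (hΦ : IsJAut d Φ) (u : EuclideanSpace ℝ (Fin d)) (b : ℝ)
    (v : EuclideanSpace ℝ (Fin d)) (h : Φ (0, u) = (b, v)) :
    (b ≠ 0 → v = 0) ∧ (u ≠ 0 → b = 0) :=
  ⟨hΦ.snd_eq_zero_of_map_pure h, fun _ => hΦ.fst_eq_zero_of_map_pure h⟩

theorem stmt_6 (d : ℕ) (hd : 1 ≤ d)
    (Φ : ℝ × EuclideanSpace ℝ (Fin d) → ℝ × EuclideanSpace ℝ (Fin d))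
    (hΦ : IsJAut d Φ) (u : EuclideanSpace ℝ (Fin d)) (b : ℝ)
    (v : EuclideanSpace ℝ (Fin d)) (h : Φ (0, u) = (b, v)) :
    (b ≠ 0 → v = 0) ∧ (u ≠ 0 → b = 0) :=
  stmt_6_general d Φ hΦ u b v h
end

section
/- For n ≥ 3, the image of the polynomial q(x₁,y₁,z₁,x₂,y₂,z₂) = p(x₁,y₁,z₁) ∘ p(x₂,y₂,z₂), where p is the associator, evaluated on J_n is exactly the set of scalar elements {(r, 0) : r ∈ ℝ}. -/
/-- The associator in `J_n`. -/
noncomputable def Jassoc (d : ℕ) (x y z : ℝ × EuclideanSpace ℝ (Fin d)) :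
    ℝ × EuclideanSpace ℝ (Fin d) :=
  Jmul d (Jmul d x y) z - Jmul d x (Jmul d y z)

/-! Associators are pure (`(0, u)`), and the product of two pure elements is the scalar
`(⟪u, v⟫, 0)`, so the image consists of scalars. Conversely, for orthonormal `e₀, e₁` the
associators `p(r e₀, e₀, e₁) = r e₁` and `p(e₀, e₀, e₁) = e₁` multiply to `(r, 0)`. -/

section SpinFactor

variable {d : ℕ}

lemma Jassoc_fst (x y z : ℝ × EuclideanSpace ℝ (Fin d)) : (Jassoc d x y z).1 = 0 := by
  simp only [Jassoc, Jmul, Prod.fst_sub, inner_add_left, inner_add_right,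
    real_inner_smul_left, real_inner_smul_right]
  ring

lemma Jmul_snd_eq_zero {x y : ℝ × EuclideanSpace ℝ (Fin d)} (hx : x.1 = 0) (hy : y.1 = 0) :
    (Jmul d x y).2 = 0 := by
  simp [Jmul, hx, hy]

lemma Jmul_zero_zero (u v : EuclideanSpace ℝ (Fin d)) :
    Jmul d (0, u) (0, v) = ((inner ℝ u v : ℝ), 0) := by
  simp [Jmul]

lemma Jassoc_zero_zero_zero (u v w : EuclideanSpace ℝ (Fin d)) :
    Jassoc d (0, u) (0, v) (0, w) = (0, (inner ℝ u v : ℝ) • w - (inner ℝ v w : ℝ) • u) := by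
  simp [Jassoc, Jmul]

lemma Jassoc_smul_unit_orthogonal (r : ℝ) {u v : EuclideanSpace ℝ (Fin d)}
    (hu : ‖u‖ = 1) (huv : (inner ℝ u v : ℝ) = 0) :
    Jassoc d (0, r • u) (0, u) (0, v) = (0, r • v) := by
  simp [Jassoc_zero_zero_zero, real_inner_smul_left, hu, huv]

lemma exists_Jmul_Jassoc_eq_scalar (hd : 2 ≤ d) (r : ℝ) :
    ∃ x₁ y₁ z₁ x₂ y₂ z₂ : ℝ × EuclideanSpace ℝ (Fin d),
      Jmul d (Jassoc d x₁ y₁ z₁) (Jassoc d x₂ y₂ z₂) = (r, 0) := by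
  obtain ⟨e, he⟩ : ∃ e : Fin 2 → EuclideanSpace ℝ (Fin d), Orthonormal ℝ e :=
    ⟨fun i ↦ EuclideanSpace.single (Fin.castLE hd i) 1,
      EuclideanSpace.orthonormal_single.comp _ (Fin.castLE_injective hd)⟩
  have h₀₁ : (inner ℝ (e 0) (e 1) : ℝ) = 0 := he.inner_eq_zero (by decide)
  refine ⟨(0, r • e 0), (0, e 0), (0, e 1), (0, (1 : ℝ) • e 0), (0, e 0), (0, e 1), ?_⟩
  rw [Jassoc_smul_unit_orthogonal r (he.1 0) h₀₁, Jassoc_smul_unit_orthogonal 1 (he.1 0) h₀₁,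
    Jmul_zero_zero]
  simp [real_inner_smul_left, he.1 1]

end SpinFactor

theorem stmt_14 (d : ℕ) (hd : 2 ≤ d) :
    {p : ℝ × EuclideanSpace ℝ (Fin d) |
        ∃ x₁ y₁ z₁ x₂ y₂ z₂, Jmul d (Jassoc d x₁ y₁ z₁) (Jassoc d x₂ y₂ z₂) = p} =
      {p : ℝ × EuclideanSpace ℝ (Fin d) | p.2 = 0} := by
  ext p
  constructor
  · rintro ⟨x₁, y₁, z₁, x₂, y₂, z₂, rfl⟩
    exact Jmul_snd_eq_zero (Jassoc_fst x₁ y₁ z₁) (Jassoc_fst x₂ y₂ z₂)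
  · intro hp
    obtain ⟨r, v⟩ := p
    obtain rfl : v = 0 := hp
    exact exists_Jmul_Jassoc_eq_scalar hd r
end

section
/- For n ≥ 2, the polynomial f(x₁,y₁,z₁,x₂,y₂,z₂,y₃,z₃) = p(p(x₁,y₁,z₁) ∘ p(x₂,y₂,z₂), y₃, z₃), where p denotes the associator, is identically zero on J_n. -/
lemma Jassoc_fst_eq_zero (d : ℕ) (x y z : ℝ × EuclideanSpace ℝ (Fin d)) :
    (Jassoc d x y z).1 = 0 := by
  simp only [Jassoc, Jmul, Prod.fst_sub, inner_add_left, inner_add_right, inner_smul_left,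
    inner_smul_right, RCLike.conj_to_real]
  ring

lemma Jmul_of_fst_eq_zero {d : ℕ} {x y : ℝ × EuclideanSpace ℝ (Fin d)}
    (hx : x.1 = 0) (hy : y.1 = 0) :
    Jmul d x y = (inner ℝ x.2 y.2, 0) := by
  simp [Jmul, hx, hy]

lemma Jmul_smul_left (d : ℕ) (s : ℝ) (x y : ℝ × EuclideanSpace ℝ (Fin d)) :
    Jmul d (s • x) y = s • Jmul d x y := by
  ext1
  · simp only [Jmul, Prod.smul_fst, Prod.smul_snd, inner_smul_left, RCLike.conj_to_real,
      smul_eq_mul]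
    ring
  · simp only [Jmul, Prod.smul_fst, Prod.smul_snd]
    module

lemma Jmul_scalar_left (d : ℕ) (s : ℝ) (y : ℝ × EuclideanSpace ℝ (Fin d)) :
    Jmul d (s, 0) y = s • y := by
  ext1 <;> simp [Jmul]

lemma Jassoc_scalar_left (d : ℕ) (s : ℝ) (y z : ℝ × EuclideanSpace ℝ (Fin d)) :
    Jassoc d (s, 0) y z = 0 := by
  rw [Jassoc, Jmul_scalar_left, Jmul_scalar_left, Jmul_smul_left, sub_self]

theorem stmt_15_general (d : ℕ)
    (x₁ y₁ z₁ x₂ y₂ z₂ y₃ z₃ : ℝ × EuclideanSpace ℝ (Fin d)) :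
    Jassoc d (Jmul d (Jassoc d x₁ y₁ z₁) (Jassoc d x₂ y₂ z₂)) y₃ z₃ = 0 := by
  rw [Jmul_of_fst_eq_zero (Jassoc_fst_eq_zero d x₁ y₁ z₁) (Jassoc_fst_eq_zero d x₂ y₂ z₂), Jassoc_scalar_left]

theorem stmt_15 (d : ℕ) (hd : 1 ≤ d)
    (x₁ y₁ z₁ x₂ y₂ z₂ y₃ z₃ : ℝ × EuclideanSpace ℝ (Fin d)) :
    Jassoc d (Jmul d (Jassoc d x₁ y₁ z₁) (Jassoc d x₂ y₂ z₂)) y₃ z₃ = 0 :=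
  stmt_15_general d x₁ y₁ z₁ x₂ y₂ z₂ y₃ z₃
end
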